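/- In the Algorithm 2 setting, write wⱼ = y⁽ʲ⁾⊛z⁽ʲ⁾. For every integer t_s/ε < i ≤ 1/ε: F(wᵢ) − F(wᵢ₋₁) ≥ ε·[(1−m)(1−ε)^{i−1}·F(p₂*) − F(wᵢ₋₁)] − ε²βD²/2. -/

import Mathlib

open scoped InnerProductSpace
open Pointwise

noncomputable section

/-- Vectors in `ℝ^n`, with the Euclidean (ℓ₂) norm and inner product. -/
abbrev Vec (n : ℕ) := EuclideanSpace ℝ (Fin n)

/-- Membership in the box `[0,1]^n`. -/
def inBox {n : ℕ} (x : Vec n) : Prop := ∀ j, 0 ≤ x j ∧ x j ≤ 1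

/-- Coordinate-wise (Hadamard) product `x ⊙ y`. -/
def had {n : ℕ} (x y : Vec n) : Vec n := WithLp.toLp 2 (fun j => x j * y j)

/-- Coordinate-wise probabilistic sum `x ⊛ y`. -/
def psum {n : ℕ} (x y : Vec n) : Vec n := WithLp.toLp 2 (fun j => x j + y j - x j * y j)

/-- The vector `1 - x` (coordinate-wise). -/
def oneM {n : ℕ} (x : Vec n) : Vec n := WithLp.toLp 2 (fun j => 1 - x j)

/-- ℓ∞-norm. -/
def normInf {n : ℕ} (x : Vec n) : ℝ := ⨆ j, |x j|

/-- DR-submodularity of `F : [0,1]^n → ℝ`. -/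
def DRSubmodular {n : ℕ} (F : Vec n → ℝ) : Prop :=
  ∀ a b : Vec n, inBox a → inBox b → (∀ j, a j ≤ b j) →
    ∀ k : ℝ, 0 < k → ∀ i : Fin n, inBox (b + EuclideanSpace.single i k) →
      F (b + EuclideanSpace.single i k) - F b ≤ F (a + EuclideanSpace.single i k) - F a

/-- `P` is down-closed (with respect to the domain `[0,1]^n`). -/
def downClosed {n : ℕ} (P : Set (Vec n)) : Prop :=
  ∀ x y : Vec n, (∀ j, 0 ≤ x j) → (∀ j, x j ≤ y j) → y ∈ P → x ∈ P

/-- The Algorithm 2 setting (`Frank-Wolfe/Continuous-Greedy Hybrid`): `Q ⊆ [0,1]^n` convex,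
`P ⊆ [0,1]^n` down-closed convex, `F : [0,1]^n → [0,∞)` nonnegative β-smooth DR-submodular
with gradient `G`, `ε ∈ (0, 1/30]` with `1/ε = N ∈ ℕ`, `t_s ∈ [0,1]` with `t_s/ε = k ∈ ℕ`,
`m = ‖y⁽⁰⁾‖∞ < 1`, and in each iteration `(a⁽ⁱ⁾, b⁽ⁱ⁾)` solves the corresponding linear
program (phase 1 for `i ≤ t_s/ε`, phase 2 otherwise). -/
structure Alg2Setting {n : ℕ} (Q P : Set (Vec n)) (F : Vec n → ℝ) (G : Vec n → Vec n)
    (β ts ε : ℝ) (k N : ℕ) (y z a b : ℕ → Vec n) : Prop where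
  hQbox : ∀ x ∈ Q, inBox x
  hQconv : Convex ℝ Q
  hPbox : ∀ x ∈ P, inBox x
  hPconv : Convex ℝ P
  hPdown : downClosed P
  hF0 : ∀ x, inBox x → 0 ≤ F x
  hDR : DRSubmodular F
  hGrad : ∀ x, inBox x → HasGradientAt F (G x) x
  hGcont : ContinuousOn G {x : Vec n | inBox x}
  hβ : 0 < β
  hsmooth : ∀ u v : Vec n, inBox u → inBox v → ‖G u - G v‖ ≤ β * ‖u - v‖
  hε0 : 0 < ε
  hε30 : ε ≤ 1/30
  hεN : (N : ℝ) * ε = 1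
  hts0 : 0 ≤ ts
  hts1 : ts ≤ 1
  hk : (k : ℝ) * ε = ts
  hy0Q : y 0 ∈ Q
  hy0min : ∀ x ∈ Q, normInf (y 0) ≤ normInf x
  hm1 : normInf (y 0) < 1
  hz0 : z 0 = 0
  hyrec : ∀ i, 1 ≤ i → i ≤ N → y i = (1-ε) • y (i-1) + ε • a i
  hzrec : ∀ i, 1 ≤ i → i ≤ N → z i = z (i-1) + ε • had (oneM (z (i-1))) (b i)
  hphase1 : ∀ i, 1 ≤ i → i ≤ k →
    a i ∈ Q ∧ b i ∈ P ∧ (∀ j, 0 ≤ a i j + b i j ∧ a i j + b i j ≤ 1) ∧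
    ∀ a' b' : Vec n, a' ∈ Q → b' ∈ P → (∀ j, 0 ≤ a' j + b' j ∧ a' j + b' j ≤ 1) →
      Real.exp (2*ε*i) * ⟪had (G (psum (y (i-1)) (z (i-1)))) (oneM (z (i-1))),
          a' + had b' (oneM (y (i-1)))⟫_ℝ
        + (1 - normInf (y 0)) * Real.exp (ε*i) * (ts - ε*i) *
          ⟪had (G (z (i-1))) (oneM (z (i-1))), b'⟫_ℝ
      ≤ Real.exp (2*ε*i) * ⟪had (G (psum (y (i-1)) (z (i-1)))) (oneM (z (i-1))),
          a i + had (b i) (oneM (y (i-1)))⟫_ℝ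
        + (1 - normInf (y 0)) * Real.exp (ε*i) * (ts - ε*i) *
          ⟪had (G (z (i-1))) (oneM (z (i-1))), b i⟫_ℝ
  hphase2 : ∀ i, k < i → i ≤ N →
    a i = y (i-1) ∧ b i ∈ P ∧
    ∀ b' ∈ P,
      ⟪had (G (psum (y (i-1)) (z (i-1)))) (oneM (z (i-1))),
          had b' (oneM (y (i-1)))⟫_ℝ
      ≤ ⟪had (G (psum (y (i-1)) (z (i-1)))) (oneM (z (i-1))),
          had (b i) (oneM (y (i-1)))⟫_ℝ

/-- The potential function `φ(i) = e^{2(εi − t_s)}·F(y⁽ⁱ⁾ ⊛ z⁽ⁱ⁾)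
  + (1−m)(1−ε)·e^{εi − 2t_s}·(t_s − εi)·F(z⁽ⁱ⁾)`. -/
def phi {n : ℕ} (F : Vec n → ℝ) (m ε ts : ℝ) (y z : ℕ → Vec n) (i : ℕ) : ℝ :=
  Real.exp (2*(ε*i - ts)) * F (psum (y i) (z i))
    + (1 - m)*(1 - ε)*Real.exp (ε*i - 2*ts)*(ts - ε*i) * F (z i)

/-!
In the second phase `y` is frozen and `z` moves by `ε (1 - z) ⊙ b`, so `w = y ⊛ z` moves by `ε u`
with `u = (1 - w) ⊙ b`. Smoothness bounds the gain `F (w + ε u) - F w` from below by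
`ε ⟪∇F(w), u⟫ - β ε² ‖u‖² / 2`, and `‖u‖ ≤ D` since `y` and `y + u` both lie in `(Q + P) ∩ [0,1]ⁿ`.
By the choice of `b`, `⟪∇F(w), u⟫ ≥ ⟪∇F(w), (1 - w) ⊙ p₂⟫`, and concavity of `F` along
nonnegative directions bounds this by `F (w ⊛ p₂) - F w` from below. Finally,
`1 - wⱼ = (1 - yⱼ)(1 - zⱼ)` loses at most a factor `1 - ε` per iteration of either phase, so it
stays `≥ (1 - m)(1 - ε)ⁱ`, and `F (w ⊛ p) ≥ (1 - s) F p` whenever `w ≤ s` coordinatewise.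
-/

open Set

section Coordinatewise

variable {n : ℕ}

@[simp] lemma had_apply (x y : Vec n) (j : Fin n) : had x y j = x j * y j := rfl

@[simp] lemma psum_apply (x y : Vec n) (j : Fin n) : psum x y j = x j + y j - x j * y j := rfl

@[simp] lemma oneM_apply (x : Vec n) (j : Fin n) : oneM x j = 1 - x j := rfl

lemma psum_comm (x y : Vec n) : psum x y = psum y x := by
  ext j; simp only [psum_apply]; ring

lemma psum_eq_add_had_oneM (x y : Vec n) : psum x y = x + had (oneM x) y := by
  ext j; simp only [psum_apply, PiLp.add_apply, had_apply, oneM_apply]; ring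

lemma inner_had_left (x y u : Vec n) : ⟪had x y, u⟫_ℝ = ⟪x, had y u⟫_ℝ := by
  simp only [PiLp.inner_apply, had_apply, RCLike.inner_apply, conj_trivial]
  exact Finset.sum_congr rfl fun j _ => by ring

lemma normInf_nonneg (x : Vec n) : 0 ≤ normInf x :=
  Real.iSup_nonneg fun j => abs_nonneg (x j)

lemma le_normInf (x : Vec n) (j : Fin n) : x j ≤ normInf x :=
  (le_abs_self _).trans (le_ciSup (f := fun j => |x j|) (finite_range _).bddAbove j)

lemma inBox_zero : inBox (0 : Vec n) := fun j => by simp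

lemma inBox_psum {x y : Vec n} (hx : inBox x) (hy : inBox y) : inBox (psum x y) := by
  intro j
  have hxj := hx j
  have hyj := hy j
  simp only [psum_apply]
  constructor <;> nlinarith

lemma convex_setOf_inBox : Convex ℝ {x : Vec n | inBox x} := by
  intro x hx y hy s t hs ht hst j
  have hxj := hx j
  have hyj := hy j
  simp only [PiLp.add_apply, PiLp.smul_apply, smul_eq_mul]
  constructor <;> nlinarith

lemma isBounded_setOf_inBox : Bornology.IsBounded {x : Vec n | inBox x} := by
  rw [isBounded_iff_forall_norm_le]
  refine ⟨Real.sqrt n, fun x hx => ?_⟩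
  rw [EuclideanSpace.norm_eq]
  gcongr
  calc ∑ j, ‖x j‖ ^ 2 ≤ ∑ _j : Fin n, (1 : ℝ) :=
        Finset.sum_le_sum fun j _ => by
          rw [Real.norm_eq_abs, sq_abs]; nlinarith [hx j]
    _ = n := by simp

end Coordinatewise

section Calculus

variable {n : ℕ} {F : Vec n → ℝ} {G : Vec n → Vec n}

lemma hasDerivAt_apply_add_smul (hG : ∀ x, inBox x → HasGradientAt F (G x) x)
    (x d : Vec n) {t : ℝ} (h : inBox (x + t • d)) :
    HasDerivAt (fun s : ℝ => F (x + s • d)) ⟪G (x + t • d), d⟫_ℝ t := by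
  have hline : HasDerivAt (fun s : ℝ => x + s • d) d t := by
    simpa using ((hasDerivAt_id t).smul_const d).const_add x
  have hcomp := (hG _ h).hasFDerivAt.comp_hasDerivAt t hline
  simp only [InnerProductSpace.toDual_apply_apply] at hcomp
  exact hcomp

lemma inner_grad_sub_le_apply_add_sub {β : ℝ} (hG : ∀ x, inBox x → HasGradientAt F (G x) x)
    (hsmooth : ∀ u v : Vec n, inBox u → inBox v → ‖G u - G v‖ ≤ β * ‖u - v‖)
    {x u : Vec n} (hx : inBox x) (hxu : inBox (x + u)) :
    ⟪G x, u⟫_ℝ - β / 2 * ‖u‖ ^ 2 ≤ F (x + u) - F x := by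
  have hseg : ∀ t ∈ Icc (0 : ℝ) 1, inBox (x + t • u) :=
    fun t ht => convex_setOf_inBox.add_smul_mem hx hxu ht
  set h : ℝ → ℝ := fun t => F (x + t • u) - t * ⟪G x, u⟫_ℝ + β / 2 * ‖u‖ ^ 2 * t ^ 2
  have hderiv : ∀ t ∈ Icc (0 : ℝ) 1,
      HasDerivAt h (⟪G (x + t • u) - G x, u⟫_ℝ + β * ‖u‖ ^ 2 * t) t := by
    intro t ht
    refine (((hasDerivAt_apply_add_smul hG x u (hseg t ht)).fun_sub
      (hasDerivAt_mul_const ⟪G x, u⟫_ℝ)).fun_add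
      ((hasDerivAt_pow 2 t).const_mul (β / 2 * ‖u‖ ^ 2))).congr_deriv ?_
    rw [inner_sub_left]
    ring
  have hmono : MonotoneOn h (Icc 0 1) := by
    refine monotoneOn_of_hasDerivWithinAt_nonneg (convex_Icc 0 1)
      (fun t ht => (hderiv t ht).continuousAt.continuousWithinAt)
      (fun t ht => (hderiv t (interior_subset ht)).hasDerivWithinAt) fun t ht => ?_
    rw [interior_Icc] at ht
    have hlip : ‖G (x + t • u) - G x‖ ≤ β * (t * ‖u‖) := by
      simpa [norm_smul, abs_of_pos ht.1] using hsmooth _ _ (hseg t (Ioo_subset_Icc_self ht)) hx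
    have hcs := neg_le_of_abs_le (abs_real_inner_le_norm (G (x + t • u) - G x) u)
    nlinarith [mul_le_mul_of_nonneg_right hlip (norm_nonneg u)]
  have h01 := hmono (left_mem_Icc.2 zero_le_one) (right_mem_Icc.2 zero_le_one) zero_le_one
  simp only [h, zero_smul, add_zero, one_smul, zero_mul, sub_zero, one_mul] at h01
  linarith

end Calculus

section DRSubmodular

variable {n : ℕ} {F : Vec n → ℝ} {G : Vec n → Vec n}

lemma DRSubmodular.grad_apply_antitone (hDR : DRSubmodular F)
    (hG : ∀ x, inBox x → HasGradientAt F (G x) x) {u v : Vec n} (hu : inBox u) (hv : inBox v)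
    (huv : ∀ j, u j ≤ v j) {j : Fin n} (hj : u j < v j) : G v j ≤ G u j := by
  set e : Vec n := EuclideanSpace.single j 1
  have hsingle : ∀ h : ℝ, EuclideanSpace.single j h = h • e := fun h => by
    ext i; by_cases hi : i = j <;> simp [e, hi]
  -- by DR-submodularity `F (u + h e) - F u - (F v - F (v - h e)) ≥ 0` for small `h > 0`
  have hderiv : HasDerivAt (fun h : ℝ => F (u + h • e) + F (v + h • -e)) (G u j - G v j) 0 := by
    refine ((hasDerivAt_apply_add_smul hG u e (by simpa using hu)).add
      (hasDerivAt_apply_add_smul hG v (-e) (by simpa using hv))).congr_deriv ?_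
    simp [e, EuclideanSpace.inner_single_right, sub_eq_add_neg]
  refine sub_nonneg.1 (ge_of_tendsto hderiv.tendsto_slope_zero_right ?_)
  filter_upwards [Ioo_mem_nhdsGT (sub_pos.2 hj)] with h ⟨hh0, hhv⟩
  have hvh : ∀ i, (v - h • e) i = v i - if i = j then h else 0 := fun i => by
    by_cases hi : i = j <;> simp [e, hi]
  have hbox : inBox (v - h • e) := fun i => by
    rw [hvh]; split_ifs with hi
    · subst hi; constructor <;> linarith [hu i, hv i]
    · simpa using hv i
  have hle : ∀ i, u i ≤ (v - h • e) i := fun i => by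
    rw [hvh]; split_ifs with hi
    · subst hi; linarith
    · simpa using huv i
  have hDRh := hDR u (v - h • e) hu hbox hle h hh0 j (by simpa [hsingle] using hv)
  simp only [hsingle, sub_add_cancel] at hDRh
  simp only [zero_add, zero_smul, add_zero, smul_neg, ← sub_eq_add_neg, sub_zero, smul_eq_mul]
  exact mul_nonneg (inv_nonneg.2 hh0.le) (by linarith)

lemma DRSubmodular.inner_grad_antitone (hDR : DRSubmodular F)
    (hG : ∀ x, inBox x → HasGradientAt F (G x) x) {x d : Vec n} (hd : ∀ j, 0 ≤ d j) {s t : ℝ}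
    (hs : inBox (x + s • d)) (ht : inBox (x + t • d)) (hst : s ≤ t) :
    ⟪G (x + t • d), d⟫_ℝ ≤ ⟪G (x + s • d), d⟫_ℝ := by
  simp only [PiLp.inner_apply, RCLike.inner_apply, conj_trivial]
  refine Finset.sum_le_sum fun j _ => ?_
  rcases (hd j).eq_or_lt with hdj | hdj
  · simp [← hdj]
  rcases hst.eq_or_lt with rfl | hlt
  · rfl
  refine mul_le_mul_of_nonneg_left (hDR.grad_apply_antitone hG hs ht (fun i => ?_) ?_) (hd j)
  · simp only [PiLp.add_apply, PiLp.smul_apply, smul_eq_mul]; nlinarith [hd i]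
  · simp only [PiLp.add_apply, PiLp.smul_apply, smul_eq_mul]; nlinarith

lemma DRSubmodular.concaveOn_apply_add_smul (hDR : DRSubmodular F)
    (hG : ∀ x, inBox x → HasGradientAt F (G x) x) (x : Vec n) {d : Vec n} (hd : ∀ j, 0 ≤ d j) :
    ConcaveOn ℝ {t : ℝ | inBox (x + t • d)} (fun t => F (x + t • d)) := by
  have hconv : Convex ℝ {t : ℝ | inBox (x + t • d)} := by
    intro s hs t ht a b ha hb hab
    have hcomb : x + (a • s + b • t) • d = a • (x + s • d) + b • (x + t • d) := by
      obtain rfl : b = 1 - a := by linarith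
      simp only [smul_eq_mul]
      module
    show inBox _
    rw [hcomb]
    exact convex_setOf_inBox hs ht ha hb hab
  have hderiv : ∀ t ∈ {t : ℝ | inBox (x + t • d)},
      HasDerivAt (fun t => F (x + t • d)) ⟪G (x + t • d), d⟫_ℝ t :=
    fun t ht => hasDerivAt_apply_add_smul hG x d ht
  refine AntitoneOn.concaveOn_of_deriv hconv
    (fun t ht => (hderiv t ht).continuousAt.continuousWithinAt)
    (fun t ht => (hderiv t (interior_subset ht)).differentiableAt.differentiableWithinAt) ?_
  intro s hs t ht hst
  rw [(hderiv s (interior_subset hs)).deriv, (hderiv t (interior_subset ht)).deriv]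
  exact hDR.inner_grad_antitone hG hd (interior_subset hs) (interior_subset ht) hst

lemma DRSubmodular.apply_add_sub_le_inner (hDR : DRSubmodular F)
    (hG : ∀ x, inBox x → HasGradientAt F (G x) x) {x d : Vec n} (hx : inBox x)
    (hd : ∀ j, 0 ≤ d j) (hxd : inBox (x + d)) :
    F (x + d) - F x ≤ ⟪G x, d⟫_ℝ := by
  have hx' : inBox (x + (0 : ℝ) • d) := by simpa using hx
  simpa [slope_def_field] using (hDR.concaveOn_apply_add_smul hG x hd).slope_le_of_hasDerivAt
    hx' (by simpa using hxd) one_pos (hasDerivAt_apply_add_smul hG x d hx')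

lemma DRSubmodular.mul_apply_le_apply_psum (hDR : DRSubmodular F)
    (hG : ∀ x, inBox x → HasGradientAt F (G x) x) (hF0 : ∀ x, inBox x → 0 ≤ F x)
    {x p : Vec n} (hx : inBox x) (hp : inBox p) {s : ℝ} (hs0 : 0 ≤ s) (hs1 : s ≤ 1)
    (hxs : ∀ j, x j ≤ s) :
    (1 - s) * F p ≤ F (psum x p) := by
  rcases hs0.eq_or_lt with rfl | hs
  · have hx0 : x = 0 := by ext j; exact le_antisymm (hxs j) (hx j).1
    have hpsum : psum x p = p := by ext j; simp [hx0]
    simp [hpsum]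
  set d := had (oneM p) x
  have hd : ∀ j, 0 ≤ d j := fun j => mul_nonneg (by simp [(hp j).2]) (hx j).1
  have hinv : 0 ≤ s⁻¹ := inv_nonneg.2 hs.le
  -- `t ↦ F (p + t d)` is concave on `[0, 1/s]`, equals `F (x ⊛ p)` at `1` and is `≥ 0` at `1/s`
  have hmem : ∀ t ∈ Icc 0 s⁻¹, inBox (p + t • d) := by
    intro t ht j
    have htx : t * x j ≤ 1 := by
      calc t * x j ≤ s⁻¹ * s := mul_le_mul ht.2 (hxs j) (hx j).1 hinv
        _ = 1 := inv_mul_cancel₀ hs.ne'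
    have hpj := hp j
    have hxj := hx j
    simp only [PiLp.add_apply, PiLp.smul_apply, smul_eq_mul, d, had_apply, oneM_apply]
    constructor <;> nlinarith [ht.1]
  have hconc := (hDR.concaveOn_apply_add_smul hG p hd).2
    (hmem 0 (left_mem_Icc.2 hinv)) (hmem s⁻¹ (right_mem_Icc.2 hinv))
    (sub_nonneg.2 hs1) hs.le (sub_add_cancel 1 s)
  have hFend := hF0 _ (hmem s⁻¹ (right_mem_Icc.2 hinv))
  rw [psum_comm, psum_eq_add_had_oneM]
  simp only [smul_eq_mul, mul_zero, zero_add, mul_inv_cancel₀ hs.ne', one_smul, zero_smul,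
    add_zero] at hconc
  nlinarith

end DRSubmodular

namespace Alg2Setting

variable {n : ℕ} {Q P : Set (Vec n)} {F : Vec n → ℝ} {G : Vec n → Vec n} {β ts ε : ℝ} {k N : ℕ}
  {y z a b : ℕ → Vec n}

lemma y_succ_of_phase2 (H : Alg2Setting Q P F G β ts ε k N y z a b) {i : ℕ} (hki : k < i + 1)
    (hi : i + 1 ≤ N) : y (i + 1) = y i := by
  have hyr := H.hyrec (i + 1) (by omega) hi
  rw [hyr, (H.hphase2 (i + 1) hki hi).1, Nat.add_sub_cancel, ← add_smul, sub_add_cancel, one_smul]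

lemma step (H : Alg2Setting Q P F G β ts ε k N y z a b) {i : ℕ} (hi : i + 1 ≤ N)
    (hy : y i ∈ Q) (hz : inBox (z i)) :
    y (i + 1) ∈ Q ∧ inBox (z (i + 1)) ∧
      ∀ j, (1 - ε) * ((1 - y i j) * (1 - z i j)) ≤ (1 - y (i + 1) j) * (1 - z (i + 1) j) := by
  have hε0 := H.hε0.le
  have hε1 : ε ≤ 1 := H.hε30.trans (by norm_num)
  have hyr := H.hyrec (i + 1) (by omega) hi
  have hzr := H.hzrec (i + 1) (by omega) hi
  simp only [Nat.add_sub_cancel] at hyr hzr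
  have hzj : ∀ j, z (i + 1) j = z i j + ε * ((1 - z i j) * b (i + 1) j) := fun j => by
    rw [hzr]; simp
  have hbP : b (i + 1) ∈ P := by
    rcases le_or_gt (i + 1) k with hik | hik
    exacts [(H.hphase1 _ (by omega) hik).2.1, (H.hphase2 _ hik hi).2.1]
  have hzbox : inBox (z (i + 1)) := fun j => by
    have hzj' := hz j
    have hbj := H.hPbox _ hbP j
    rw [hzj]
    constructor
    · nlinarith [mul_nonneg (mul_nonneg hε0 (sub_nonneg.2 hzj'.2)) hbj.1]
    · nlinarith [mul_nonneg (sub_nonneg.2 hzj'.2) (sub_nonneg.2 hε1),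
        mul_nonneg (mul_nonneg hε0 (sub_nonneg.2 hzj'.2)) (sub_nonneg.2 hbj.2)]
  rcases le_or_gt (i + 1) k with hik | hik
  · obtain ⟨haQ, -, hab, -⟩ := H.hphase1 (i + 1) (by omega) hik
    refine ⟨hyr ▸ H.hQconv hy haQ (by linarith) hε0 (by ring), hzbox, fun j => ?_⟩
    have hyj : y (i + 1) j = (1 - ε) * y i j + ε * a (i + 1) j := by rw [hyr]; simp
    have hbj := H.hPbox _ hbP j
    have hzj' := sub_nonneg.2 (hz j).2
    rw [hyj, hzj]
    -- `(1 - y')(1 - z') = (1 - z)(1 - ε b)((1 - ε)(1 - y) + ε (1 - a))` and `1 - a ≥ b`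
    nlinarith [mul_nonneg (mul_nonneg (mul_nonneg hzj' hε0)
        (by linarith [(hab j).2] : (0 : ℝ) ≤ 1 - a (i + 1) j - b (i + 1) j))
        (by nlinarith : (0 : ℝ) ≤ 1 - ε * b (i + 1) j),
      mul_nonneg (mul_nonneg (mul_nonneg (mul_nonneg hzj' hε0) hbj.1) hε0) (sub_nonneg.2 hbj.2),
      mul_nonneg (mul_nonneg (mul_nonneg (mul_nonneg hzj' hε0) hbj.1) (sub_nonneg.2 hε1))
        (H.hQbox _ hy j).1]
  · have hy' := H.y_succ_of_phase2 hik hi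
    refine ⟨hy' ▸ hy, hzbox, fun j => ?_⟩
    rw [hy', hzj]
    nlinarith [mul_nonneg (mul_nonneg (sub_nonneg.2 (H.hQbox _ hy j).2) (sub_nonneg.2 (hz j).2))
      (mul_nonneg hε0 (sub_nonneg.2 (H.hPbox _ hbP j).2))]

lemma invariant (H : Alg2Setting Q P F G β ts ε k N y z a b) :
    ∀ i ≤ N, y i ∈ Q ∧ inBox (z i) ∧
      ∀ j, (1 - normInf (y 0)) * (1 - ε) ^ i ≤ (1 - y i j) * (1 - z i j) := by
  intro i
  induction i with
  | zero =>
    intro _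
    refine ⟨H.hy0Q, H.hz0 ▸ inBox_zero, fun j => ?_⟩
    simp only [H.hz0, pow_zero, mul_one, PiLp.zero_apply, sub_zero]
    linarith [le_normInf (y 0) j]
  | succ i ih =>
    intro hi
    obtain ⟨hy, hz, hprod⟩ := ih (by omega)
    obtain ⟨hy', hz', hstep⟩ := H.step hi hy hz
    refine ⟨hy', hz', fun j => ?_⟩
    calc (1 - normInf (y 0)) * (1 - ε) ^ (i + 1)
        = (1 - ε) * ((1 - normInf (y 0)) * (1 - ε) ^ i) := by ring
      _ ≤ (1 - ε) * ((1 - y i j) * (1 - z i j)) :=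
        mul_le_mul_of_nonneg_left (hprod j) (by linarith [H.hε30])
      _ ≤ _ := hstep j

lemma psum_succ_of_phase2 (H : Alg2Setting Q P F G β ts ε k N y z a b) {i : ℕ}
    (hki : k < i + 1) (hi : i + 1 ≤ N) :
    psum (y (i + 1)) (z (i + 1))
      = psum (y i) (z i) + ε • had (oneM (psum (y i) (z i))) (b (i + 1)) := by
  rw [H.y_succ_of_phase2 hki hi, H.hzrec (i + 1) (by omega) hi, Nat.add_sub_cancel]
  ext j
  simp only [psum_apply, PiLp.add_apply, PiLp.smul_apply, smul_eq_mul, had_apply, oneM_apply]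
  ring

lemma norm_had_oneM_psum_le_diam (H : Alg2Setting Q P F G β ts ε k N y z a b) {x w c : Vec n}
    (hx : x ∈ Q) (hw : inBox w) (hc : c ∈ P) :
    ‖had (oneM (psum x w)) c‖ ≤ Metric.diam ((Q + P) ∩ {x : Vec n | inBox x}) := by
  set u := had (oneM (psum x w)) c
  have hxj := H.hQbox _ hx
  have hcj := H.hPbox _ hc
  have hu : ∀ j, u j = (1 - x j) * (1 - w j) * c j := fun j => by
    simp only [u, had_apply, oneM_apply, psum_apply]; ring
  have huP : u ∈ P := by
    refine H.hPdown u c (fun j => ?_) (fun j => ?_) hc <;> rw [hu]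
    · exact mul_nonneg (mul_nonneg (sub_nonneg.2 (hxj j).2) (sub_nonneg.2 (hw j).2)) (hcj j).1
    · nlinarith [mul_nonneg (hxj j).1 (hcj j).1,
        mul_nonneg (mul_nonneg (hw j).1 (sub_nonneg.2 (hxj j).2)) (hcj j).1]
  have h0P : (0 : Vec n) ∈ P := H.hPdown 0 c (fun _ => le_rfl) (fun j => (hcj j).1) hc
  have hxmem : x ∈ (Q + P) ∩ {x : Vec n | inBox x} := ⟨by simpa using Set.add_mem_add hx h0P, hxj⟩
  have hxumem : x + u ∈ (Q + P) ∩ {x : Vec n | inBox x} := by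
    refine ⟨Set.add_mem_add hx huP, fun j => ?_⟩
    simp only [PiLp.add_apply, hu]
    constructor <;> nlinarith [hxj j, hw j, hcj j,
      mul_nonneg (mul_nonneg (sub_nonneg.2 (hxj j).2) (sub_nonneg.2 (hw j).2)) (hcj j).1,
      mul_nonneg (mul_nonneg (sub_nonneg.2 (hxj j).2) (hw j).1) (hcj j).1,
      mul_nonneg (sub_nonneg.2 (hxj j).2) (sub_nonneg.2 (hcj j).2)]
  simpa [dist_eq_norm] using
    Metric.dist_le_diam_of_mem (isBounded_setOf_inBox.subset Set.inter_subset_right) hxumem hxmem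

lemma sub_le_inner_of_phase2 (H : Alg2Setting Q P F G β ts ε k N y z a b) {i : ℕ}
    (hki : k < i + 1) (hi : i + 1 ≤ N) {p₂ : Vec n} (hp₂ : p₂ ∈ P) :
    (1 - normInf (y 0)) * (1 - ε) ^ i * F p₂ - F (psum (y i) (z i))
      ≤ ⟪G (psum (y i) (z i)), had (oneM (psum (y i) (z i))) (b (i + 1))⟫_ℝ := by
  obtain ⟨hy, hz, hprod⟩ := H.invariant i (by omega)
  obtain ⟨-, -, hopt⟩ := H.hphase2 (i + 1) hki hi
  simp only [Nat.add_sub_cancel] at hopt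
  set w := psum (y i) (z i)
  have hw : inBox w := inBox_psum (H.hQbox _ hy) hz
  have hp₂box := H.hPbox _ hp₂
  have hLP : ∀ c, ⟪had (G w) (oneM (z i)), had c (oneM (y i))⟫_ℝ = ⟪G w, had (oneM w) c⟫_ℝ := by
    intro c
    rw [inner_had_left]
    congr 1
    ext j
    simp only [had_apply, oneM_apply, w, psum_apply]
    ring
  have hopt₂ : ⟪G w, had (oneM w) p₂⟫_ℝ ≤ ⟪G w, had (oneM w) (b (i + 1))⟫_ℝ := by
    simpa only [hLP] using hopt p₂ hp₂
  have htangent : F (psum w p₂) - F w ≤ ⟪G w, had (oneM w) p₂⟫_ℝ := by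
    rw [psum_eq_add_had_oneM]
    refine H.hDR.apply_add_sub_le_inner H.hGrad hw
      (fun j => mul_nonneg (by simp [(hw j).2]) (hp₂box j).1) ?_
    rw [← psum_eq_add_had_oneM]
    exact inBox_psum hw hp₂box
  have hq0 : 0 ≤ (1 - normInf (y 0)) * (1 - ε) ^ i :=
    mul_nonneg (by linarith [H.hm1]) (pow_nonneg (by linarith [H.hε30]) i)
  have hq1 : (1 - normInf (y 0)) * (1 - ε) ^ i ≤ 1 :=
    mul_le_one₀ (by linarith [normInf_nonneg (y 0)]) (pow_nonneg (by linarith [H.hε30]) i)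
      (pow_le_one₀ (by linarith [H.hε30]) (by linarith [H.hε0]))
  have hlower := H.hDR.mul_apply_le_apply_psum H.hGrad H.hF0 hw hp₂box (sub_nonneg.2 hq1)
    (by linarith) (fun j => by
      have hwj : w j = 1 - (1 - y i j) * (1 - z i j) := by simp only [w, psum_apply]; ring
      linarith [hprod j])
  rw [sub_sub_cancel] at hlower
  linarith

end Alg2Setting

theorem stmt_16_general {n : ℕ} (Q P : Set (Vec n)) (F : Vec n → ℝ) (G : Vec n → Vec n)
    (β ts ε : ℝ) (k N : ℕ) (y z a b : ℕ → Vec n)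
    (H : Alg2Setting Q P F G β ts ε k N y z a b)
    (p₂ : Vec n) (hp₂ : p₂ ∈ P)
    (m : ℝ) (hm : m = normInf (y 0))
    (D : ℝ) (hD : D = Metric.diam ((Q + P) ∩ {x : Vec n | inBox x})) :
    ∀ i, k < i → i ≤ N →
      ε * ((1 - m) * (1 - ε)^(i-1) * F p₂ - F (psum (y (i-1)) (z (i-1))))
        - ε^2*β*D^2/2
      ≤ F (psum (y i) (z i)) - F (psum (y (i-1)) (z (i-1))) := by
  subst hm hD
  intro i hki hi
  obtain ⟨i, rfl⟩ : ∃ i', i = i' + 1 := ⟨i - 1, by omega⟩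
  rw [Nat.add_sub_cancel]
  obtain ⟨hy, hz, -⟩ := H.invariant i (by omega)
  obtain ⟨hy', hz', -⟩ := H.invariant (i + 1) hi
  set w := psum (y i) (z i)
  set u := had (oneM w) (b (i + 1))
  have hstep : psum (y (i + 1)) (z (i + 1)) = w + ε • u := H.psum_succ_of_phase2 hki hi
  have hdescent := inner_grad_sub_le_apply_add_sub H.hGrad H.hsmooth
    (inBox_psum (H.hQbox _ hy) hz) (hstep ▸ inBox_psum (H.hQbox _ hy') hz')
  have hgain := H.sub_le_inner_of_phase2 hki hi hp₂
  have hu := H.norm_had_oneM_psum_le_diam hy hz (H.hphase2 (i + 1) hki hi).2.1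
  have hu2 : ‖u‖ ^ 2 ≤ (Metric.diam ((Q + P) ∩ {x : Vec n | inBox x})) ^ 2 :=
    pow_le_pow_left₀ (norm_nonneg u) hu 2
  rw [inner_smul_right, norm_smul, Real.norm_of_nonneg H.hε0.le] at hdescent
  rw [hstep]
  nlinarith [mul_le_mul_of_nonneg_left hgain H.hε0.le,
    mul_le_mul_of_nonneg_left hu2 (mul_nonneg H.hβ.le (sq_nonneg ε))]

/-- Lemma 4.18 / `lem:increase_second_part`: in the Algorithm 2 setting,
with `wⱼ = y⁽ʲ⁾ ⊛ z⁽ʲ⁾`, for every `t_s/ε < i ≤ 1/ε`: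
`F(wᵢ) − F(wᵢ₋₁) ≥ ε·[(1−m)(1−ε)^{i−1}·F(p₂*) − F(wᵢ₋₁)] − ε²βD²/2`. -/
theorem stmt_16 {n : ℕ} (Q P : Set (Vec n)) (F : Vec n → ℝ) (G : Vec n → Vec n)
    (β ts ε : ℝ) (k N : ℕ) (y z a b : ℕ → Vec n)
    (H : Alg2Setting Q P F G β ts ε k N y z a b)
    (q p o : Vec n) (hq : q ∈ Q) (hp : p ∈ P) (hqp : ∀ j, q j + p j ≤ 1)
    (ho : o = q + p) (p₂ : Vec n) (hp₂ : p₂ ∈ P)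
    (m : ℝ) (hm : m = normInf (y 0))
    (D : ℝ) (hD : D = Metric.diam ((Q + P) ∩ {x : Vec n | inBox x})) :
    ∀ i, k < i → i ≤ N →
      ε * ((1 - m) * (1 - ε)^(i-1) * F p₂ - F (psum (y (i-1)) (z (i-1))))
        - ε^2*β*D^2/2
      ≤ F (psum (y i) (z i)) - F (psum (y (i-1)) (z (i-1))) :=
  stmt_16_general Q P F G β ts ε k N y z a b H p₂ hp₂ m hm D hD
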